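/- Let M₁, …, M_t be Boolean adjacency matrices of rooted trees on [n] with self-loops, and suppose that in the Boolean product M₁ ⋯ M_t no row is all-true. Then every column of M₁ ⋯ M_t that is not all-false differs from the corresponding column of M₁ ⋯ M_{t+1} only by possibly gaining true entries, and the total number of true entries in the product strictly increases from round t to round t+1. -/

import Mathlib

/-!
Because of the self-loops, multiplying by `M_{t+1}` never destroys a true entry, and the
diagonal of every product is true. Let `r` be the root of `M_{t+1}`. If row `r` gained no
true entry, its support would contain `r` and be closed under the edges of the tree, hence
contain every vertex, as all are reachable from the root; so row `r` would be all-true.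
-/

namespace Broadcast

/-- `n × n` Boolean matrices. -/
abbrev BMatrix (n : ℕ) := Fin n → Fin n → Bool

/-- Boolean matrix multiplication: `(M · N)(x,y) = ∃ z, M(x,z) ∧ N(z,y)`. -/
def bmul {n : ℕ} (M N : BMatrix n) : BMatrix n :=
  fun x y => decide (∃ z, M x z = true ∧ N z y = true)

/-- The Boolean product `M₁ ⋯ M_t` (the empty product is the identity matrix). -/
def bprodUpTo {n : ℕ} (M : ℕ → BMatrix n) : ℕ → BMatrix n
  | 0 => fun x y => decide (x = y)
  | t + 1 => bmul (bprodUpTo M t) (M (t + 1))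

/-- `M` is the adjacency matrix of a rooted tree on `[n]` with self-loops, with root `r`
and parent map `p`. -/
structure IsRootedTreeMatrix {n : ℕ} (M : BMatrix n) (r : Fin n) (p : Fin n → Fin n) :
    Prop where
  loops : ∀ x, M x x = true
  parent_edge : ∀ y, y ≠ r → M (p y) y = true
  parent_ne : ∀ y, y ≠ r → p y ≠ y
  edges : ∀ x y, M x y = true → x = y ∨ (y ≠ r ∧ x = p y)
  reach : ∀ y, Relation.ReflTransGen (fun a b => M a b = true) r y

theorem card_filter_lt_card_filter {α : Type*} {s : Finset α} {P Q : α → Prop}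
    [DecidablePred P] [DecidablePred Q] (hPQ : ∀ a ∈ s, P a → Q a) {a : α} (ha : a ∈ s)
    (hPa : ¬P a) (hQa : Q a) : (s.filter P).card < (s.filter Q).card := by
  refine Finset.card_lt_card ((Finset.ssubset_iff_of_subset ?_).2 ⟨a, ?_, ?_⟩)
  · intro b hb
    rw [Finset.mem_filter] at hb ⊢
    exact ⟨hb.1, hPQ b hb.1 hb.2⟩
  · exact Finset.mem_filter.2 ⟨ha, hQa⟩
  · exact fun h => hPa (Finset.mem_filter.1 h).2

section

variable {n : ℕ}

theorem bmul_eq_true {A N : BMatrix n} {x y : Fin n} :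
    bmul A N x y = true ↔ ∃ z, A x z = true ∧ N z y = true := by
  simp [bmul]

theorem bmul_eq_true_of_left {A N : BMatrix n} (hN : ∀ y, N y y = true) {x y : Fin n}
    (h : A x y = true) : bmul A N x y = true :=
  bmul_eq_true.2 ⟨y, h, hN y⟩

theorem bprodUpTo_diag {M : ℕ → BMatrix n} (hM : ∀ i, 1 ≤ i → ∀ x, M i x x = true) :
    ∀ t x, bprodUpTo M t x x = true
  | 0, _ => decide_eq_true rfl
  | t + 1, x => bmul_eq_true_of_left (hM (t + 1) (by omega)) (bprodUpTo_diag hM t x)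

theorem IsRootedTreeMatrix.exists_bmul_new_entry {N : BMatrix n} {r : Fin n}
    {p : Fin n → Fin n} (hN : IsRootedTreeMatrix N r p) {A : BMatrix n} (hr : A r r = true)
    {y : Fin n} (hy : A r y = false) :
    ∃ b, A r b = false ∧ bmul A N r b = true := by
  by_contra! hcon
  have hclosed : ∀ a b, A r a = true → N a b = true → A r b = true := fun a b ha hab => by
    by_contra hb
    exact absurd (bmul_eq_true.2 ⟨a, ha, hab⟩) (by simpa using hcon b (by simpa using hb))
  have hall : ∀ b, A r b = true := fun b => by
    induction hN.reach b with
    | refl => exact hr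
    | tail _ hab ih => exact hclosed _ _ ih hab
  simp [hall y] at hy

end

/-- If `M₁, …` are adjacency matrices of rooted trees with self-loops and no row of the
Boolean product `M₁ ⋯ M_t` is all-true, then every not-all-false column of `M₁ ⋯ M_t`
only gains true entries in `M₁ ⋯ M_{t+1}`, and the total number of true entries strictly
increases from round `t` to round `t + 1`. -/
theorem column_monotone_and_count_increase {n : ℕ} (M : ℕ → BMatrix n) (t : ℕ)
    (htree : ∀ i, 1 ≤ i → ∃ r p, IsRootedTreeMatrix (M i) r p)
    (hnorow : ∀ x : Fin n, ∃ y, bprodUpTo M t x y = false) :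
    (∀ y : Fin n, (∃ x, bprodUpTo M t x y = true) →
      ∀ x, bprodUpTo M t x y = true → bprodUpTo M (t + 1) x y = true) ∧
    (Finset.univ.filter fun e : Fin n × Fin n => bprodUpTo M t e.1 e.2 = true).card <
      (Finset.univ.filter fun e : Fin n × Fin n =>
        bprodUpTo M (t + 1) e.1 e.2 = true).card := by
  have hloops : ∀ i, 1 ≤ i → ∀ x, M i x x = true := fun i hi x => by
    obtain ⟨_, _, h⟩ := htree i hi
    exact h.loops x
  have hmono : ∀ x y, bprodUpTo M t x y = true → bprodUpTo M (t + 1) x y = true :=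
    fun _ _ => bmul_eq_true_of_left (hloops (t + 1) (by omega))
  obtain ⟨r, p, htr⟩ := htree (t + 1) (by omega)
  obtain ⟨y, hy⟩ := hnorow r
  obtain ⟨b, hbf, hbt⟩ := htr.exists_bmul_new_entry (bprodUpTo_diag hloops t r) hy
  exact ⟨fun y _ x => hmono x y, card_filter_lt_card_filter (fun e _ => hmono e.1 e.2)
    (Finset.mem_univ (r, b)) (by simp [hbf]) hbt⟩

end Broadcast
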